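/- arXiv:1606.00942 — 3 statements merged into one kernel-verified Lean document; each statement's English description precedes it below -/
import Mathlib

section
/- For every symmetric matrix B ∈ ℝ^{d×d} and every m ≥ 1, the Hutchinson trace estimator tr_m(B) satisfies E[tr_m(B)] = tr(B) and Var[tr_m(B)] = (2/m)(‖B‖_F² − Σ_{i=1}^d B_{ii}²), where ‖B‖_F denotes the Frobenius norm of B. -/
open scoped BigOperators

/-- Chebyshev node `x_k = cos(π(k+1/2)/(n+1))`. -/
noncomputable def chebNode (n k : ℕ) : ℝ := Real.cos (Real.pi * (k + 1/2) / (n + 1))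

/-- `j`-th Chebyshev polynomial of the first kind, as a real function. -/
noncomputable def chebT (j : ℕ) (x : ℝ) : ℝ := (Polynomial.Chebyshev.T ℝ j).eval x

/-- Coefficients of the degree-`n` Chebyshev interpolant of `f` on `[-1,1]`. -/
noncomputable def chebCoeff (f : ℝ → ℝ) (n j : ℕ) : ℝ :=
  if j = 0 then (1/(n+1)) * ∑ k ∈ Finset.range (n+1), f (chebNode n k)
  else (2/(n+1)) * ∑ k ∈ Finset.range (n+1), f (chebNode n k) * chebT j (chebNode n k)

/-- Degree-`n` Chebyshev interpolant of `f` on `[-1,1]`. -/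
noncomputable def chebInterp (f : ℝ → ℝ) (n : ℕ) (x : ℝ) : ℝ :=
  ∑ j ∈ Finset.range (n+1), chebCoeff f n j * chebT j x

/-- Coefficients of the degree-`n` Chebyshev interpolant of `f` on `[a,b]`. -/
noncomputable def chebCoeffAB (f : ℝ → ℝ) (a b : ℝ) (n j : ℕ) : ℝ :=
  chebCoeff (fun x => f ((b-a)/2 * x + (b+a)/2)) n j

/-- Degree-`n` Chebyshev interpolant of `f` on `[a,b]`. -/
noncomputable def chebInterpAB (f : ℝ → ℝ) (a b : ℝ) (n : ℕ) (x : ℝ) : ℝ :=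
  ∑ j ∈ Finset.range (n+1), chebCoeffAB f a b n j * chebT j ((2*x - (b+a))/(b-a))

/-- Bernstein ellipse `E_ρ`. -/
def bernsteinEllipse (ρ : ℝ) : Set ℂ :=
  {z : ℂ | (2*z.re/(ρ + ρ⁻¹))^2 + (2*z.im/(ρ - ρ⁻¹))^2 ≤ 1}

/-- Evaluation of the degree-`n` Chebyshev interpolant of `f` on `[a,b]` at a matrix `A`. -/
noncomputable def chebInterpMatrixAB {d : ℕ} (f : ℝ → ℝ) (a b : ℝ) (n : ℕ)
    (A : Matrix (Fin d) (Fin d) ℝ) : Matrix (Fin d) (Fin d) ℝ :=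
  ∑ j ∈ Finset.range (n+1), chebCoeffAB f a b n j •
    (Polynomial.aeval ((2/(b-a)) • A - ((b+a)/(b-a)) • (1 : Matrix (Fin d) (Fin d) ℝ))
      (Polynomial.Chebyshev.T ℝ j))

/-- Evaluation of the degree-`n` Chebyshev interpolant of `f` on `[-1,1]` at a matrix `A`. -/
noncomputable def chebInterpMatrix {d : ℕ} (f : ℝ → ℝ) (n : ℕ)
    (A : Matrix (Fin d) (Fin d) ℝ) : Matrix (Fin d) (Fin d) ℝ :=
  ∑ j ∈ Finset.range (n+1), chebCoeff f n j • (Polynomial.aeval A (Polynomial.Chebyshev.T ℝ j))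

/-- A Boolean vector seen as a `±1` (Rademacher) vector. -/
def signVec {d : ℕ} (ω : Fin d → Bool) : Fin d → ℝ := fun j => if ω j then 1 else -1

/-- Hutchinson's trace estimator with `m` Rademacher sample vectors encoded by `ω`. -/
noncomputable def hutchinson {d : ℕ} (m : ℕ) (B : Matrix (Fin d) (Fin d) ℝ)
    (ω : Fin m → Fin d → Bool) : ℝ :=
  (1/(m:ℝ)) * ∑ i : Fin m, dotProduct (signVec (ω i)) (B.mulVec (signVec (ω i)))

open Classical in
/-- Probability of an event under the uniform distribution on a finite sample space. -/
noncomputable def unifProb {Ω : Type*} [Fintype Ω] (P : Ω → Prop) : ℝ :=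
  (Finset.univ.filter P).card / Fintype.card Ω

/-! For a uniformly random sign vector `s`, the centred quadratic form
`sᵀ B s - tr B = ∑_{a ≠ b} B a b * s a * s b` is a combination of the Walsh characters
`χ_{a,b}(s) = s a * s b` of the cube, which are orthonormal. Hence it has mean `0` and second
moment `∑_{a ≠ b} B a b * (B a b + B b a) = 2 ∑_{a ≠ b} (B a b)²`. The estimator is the mean of
`m` independent copies, which keeps the mean and divides the variance by `m`. -/

open Finset Matrix

namespace Fintype

variable {ι K : Type*} [Fintype ι] [DecidableEq ι] [Semifield K] [CharZero K]

theorem expect_pi_prod {κ : ι → Type*} [∀ i, Fintype (κ i)] (f : ∀ i, κ i → K) :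
    𝔼 x : ∀ i, κ i, ∏ i, f i (x i) = ∏ i, 𝔼 y, f i y := by
  simp only [Fintype.expect_eq_sum_div_card, Fintype.card_pi, Nat.cast_prod,
    ← Fintype.prod_sum, Finset.prod_div_distrib]

variable {X : Type*} [Fintype X] [Nonempty X]

theorem expect_comp_eval (i : ι) (g : X → K) : 𝔼 ω : ι → X, g (ω i) = 𝔼 x, g x := by
  have h := expect_pi_prod fun (k : ι) (x : X) ↦ if k = i then g x else 1
  rw [Fintype.prod_eq_single i fun k hk ↦ by simp [hk],
    expect_congr rfl fun ω _ ↦ Fintype.prod_eq_single i fun k hk ↦ by simp [hk]] at h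
  simpa using h

theorem expect_comp_eval_mul_comp_eval {i j : ι} (hij : i ≠ j) (f g : X → K) :
    𝔼 ω : ι → X, f (ω i) * g (ω j) = (𝔼 x, f x) * 𝔼 x, g x := by
  have h := expect_pi_prod fun (k : ι) (x : X) ↦ if k = i then f x else if k = j then g x else 1
  rw [Fintype.prod_eq_mul i j hij fun k hk ↦ by simp [hk],
    expect_congr rfl fun ω _ ↦ Fintype.prod_eq_mul i j hij fun k hk ↦ by simp [hk]] at h
  simpa [hij.symm] using h

theorem expect_sum_comp_eval_sq {g : X → K} (hg : 𝔼 x, g x = 0) :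
    𝔼 ω : ι → X, (∑ i, g (ω i)) ^ 2 = card ι * 𝔼 x, g x ^ 2 := by
  simp_rw [sq, Finset.sum_mul_sum, Finset.expect_sum_comm]
  rw [Finset.sum_congr rfl fun i _ ↦ Fintype.sum_eq_single i fun j hj ↦ by
    rw [expect_comp_eval_mul_comp_eval (Ne.symm hj), hg, zero_mul]]
  simp only [expect_comp_eval (g := fun x ↦ g x * g x)]
  rw [Finset.sum_const, Finset.card_univ, nsmul_eq_mul]

end Fintype

namespace Finset

variable {α M : Type*} [DecidableEq α] [AddCommMonoid M]

theorem sum_sum_eq_sum_add_sum_offDiag (s : Finset α) (f : α → α → M) :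
    ∑ i ∈ s, ∑ j ∈ s, f i j = ∑ i ∈ s, f i i + ∑ p ∈ s.offDiag, f p.1 p.2 := by
  rw [← sum_product' s s f, ← diag_union_offDiag, sum_union (disjoint_diag_offDiag s), sum_diag]

theorem pair_eq_pair_iff {a b c e : α} :
    ({a, b} : Finset α) = {c, e} ↔ a = c ∧ b = e ∨ a = e ∧ b = c := by
  rw [← coe_inj, coe_pair, coe_pair, Set.pair_eq_pair_iff]

theorem sum_offDiag_ite_pair_eq_pair {s : Finset α} {p : α × α} (hp : p ∈ s.offDiag)
    (f : α × α → M) :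
    ∑ q ∈ s.offDiag, (if ({p.1, p.2} : Finset α) = {q.1, q.2} then f q else 0) =
      f p + f p.swap := by
  obtain ⟨-, -, hp⟩ := mem_offDiag.1 hp
  have hfilter : s.offDiag.filter (fun q ↦ ({p.1, p.2} : Finset α) = {q.1, q.2}) =
      {p, p.swap} := by
    ext ⟨a, b⟩
    simp only [mem_filter, mem_offDiag, pair_eq_pair_iff, mem_insert, mem_singleton,
      Prod.ext_iff, Prod.fst_swap, Prod.snd_swap]
    aesop
  rw [← sum_filter, hfilter, sum_pair fun h ↦ hp (congrArg Prod.fst h)]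

end Finset

section Rademacher

variable {d : ℕ}

theorem signVec_mul_self (v : Fin d → Bool) (j : Fin d) : signVec v j * signVec v j = 1 := by
  unfold signVec
  split_ifs <;> norm_num

def walsh (S : Finset (Fin d)) (v : Fin d → Bool) : ℝ := ∏ l ∈ S, signVec v l

theorem walsh_pair {a b : Fin d} (hab : a ≠ b) (v : Fin d → Bool) :
    walsh {a, b} v = signVec v a * signVec v b :=
  prod_pair hab

theorem expect_walsh_mul_walsh (S T : Finset (Fin d)) :
    𝔼 v, walsh S v * walsh T v = if S = T then 1 else 0 := by
  let f : Fin d → Bool → ℝ := fun l b ↦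
    (if l ∈ S then (if b then 1 else -1) else 1) * (if l ∈ T then (if b then 1 else -1) else 1)
  have hfactor : ∀ v, walsh S v * walsh T v = ∏ l, f l (v l) := fun v ↦ by
    rw [walsh, walsh, ← Fintype.prod_ite_mem S, ← Fintype.prod_ite_mem T, ← prod_mul_distrib]
    rfl
  have hcoord : ∀ l, 𝔼 b, f l b = if (l ∈ S ↔ l ∈ T) then 1 else 0 := fun l ↦ by
    by_cases hS : l ∈ S <;> by_cases hT : l ∈ T <;>
      simp only [f, hS, hT, Fintype.expect_eq_sum_div_card, Fintype.sum_bool] <;> norm_num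
  simp_rw [hfactor, Fintype.expect_pi_prod f, hcoord, Fintype.prod_boole, ← Finset.ext_iff]

theorem expect_walsh (S : Finset (Fin d)) : 𝔼 v, walsh S v = if S = ∅ then 1 else 0 := by
  simpa [walsh] using expect_walsh_mul_walsh S ∅

theorem signVec_dotProduct_mulVec_sub_trace (B : Matrix (Fin d) (Fin d) ℝ) (v : Fin d → Bool) :
    signVec v ⬝ᵥ B *ᵥ signVec v - B.trace =
      ∑ p ∈ univ.offDiag, B p.1 p.2 * walsh {p.1, p.2} v := by
  have hexpand : signVec v ⬝ᵥ B *ᵥ signVec v =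
      ∑ i, ∑ j, B i j * (signVec v i * signVec v j) := by
    simp only [dotProduct, mulVec, mul_sum]
    exact sum_congr rfl fun i _ ↦ sum_congr rfl fun j _ ↦ by ring
  rw [hexpand, sum_sum_eq_sum_add_sum_offDiag]
  simp only [signVec_mul_self, mul_one, trace, Matrix.diag, add_sub_cancel_left]
  exact sum_congr rfl fun p hp ↦ by rw [walsh_pair (mem_offDiag.1 hp).2.2]

theorem expect_signVec_dotProduct_mulVec_sub_trace (B : Matrix (Fin d) (Fin d) ℝ) :
    𝔼 v, (signVec v ⬝ᵥ B *ᵥ signVec v - B.trace) = 0 := by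
  simp_rw [signVec_dotProduct_mulVec_sub_trace, expect_sum_comm, ← mul_expect, expect_walsh,
    insert_ne_empty, if_false, mul_zero, sum_const_zero]

theorem expect_sq_signVec_dotProduct_mulVec_sub_trace {B : Matrix (Fin d) (Fin d) ℝ}
    (hB : B.IsSymm) :
    𝔼 v, (signVec v ⬝ᵥ B *ᵥ signVec v - B.trace) ^ 2 =
      2 * ∑ p ∈ univ.offDiag, B p.1 p.2 ^ 2 := by
  simp_rw [signVec_dotProduct_mulVec_sub_trace, sq, sum_mul_sum, expect_sum_comm]
  calc _ = ∑ p ∈ univ.offDiag, ∑ q ∈ univ.offDiag,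
        if ({p.1, p.2} : Finset (Fin d)) = {q.1, q.2} then B p.1 p.2 * B q.1 q.2 else 0 := by
        simp_rw [mul_mul_mul_comm, ← mul_expect, expect_walsh_mul_walsh, mul_ite, mul_one,
          mul_zero]
    _ = ∑ p ∈ univ.offDiag, (B p.1 p.2 * B p.1 p.2 + B p.1 p.2 * B p.2 p.1) :=
        sum_congr rfl fun p hp ↦ sum_offDiag_ite_pair_eq_pair hp fun q ↦ B p.1 p.2 * B q.1 q.2
    _ = _ := by
        rw [mul_sum]
        exact sum_congr rfl fun p _ ↦ by rw [hB.apply]; ring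

end Rademacher

/-- Mean and variance of the Hutchinson trace estimator. -/
theorem hutchinson_mean_variance {d : ℕ} (B : Matrix (Fin d) (Fin d) ℝ) (hB : B.IsSymm)
    (m : ℕ) (hm : 1 ≤ m) :
    (∑ ω : Fin m → Fin d → Bool, hutchinson m B ω) /
        (Fintype.card (Fin m → Fin d → Bool) : ℝ) = B.trace ∧
    (∑ ω : Fin m → Fin d → Bool, (hutchinson m B ω - B.trace) ^ 2) /
        (Fintype.card (Fin m → Fin d → Bool) : ℝ) =
      (2 / (m : ℝ)) * ((∑ i : Fin d, ∑ j : Fin d, (B i j) ^ 2) - ∑ i : Fin d, (B i i) ^ 2) := by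
  set g : (Fin d → Bool) → ℝ := fun v ↦ signVec v ⬝ᵥ B *ᵥ signVec v - B.trace
  have hm0 : (m : ℝ) ≠ 0 := Nat.cast_ne_zero.2 (by omega)
  have hcentered : ∀ ω, hutchinson m B ω - B.trace = (1 / m) * ∑ i, g (ω i) := fun ω ↦ by
    rw [hutchinson, sum_sub_distrib, sum_const, card_univ, Fintype.card_fin, nsmul_eq_mul]
    field_simp
  have hg : 𝔼 v, g v = 0 := expect_signVec_dotProduct_mulVec_sub_trace B
  have hg2 : 𝔼 v, g v ^ 2 = 2 * ∑ p ∈ univ.offDiag, B p.1 p.2 ^ 2 :=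
    expect_sq_signVec_dotProduct_mulVec_sub_trace hB
  simp only [← Fintype.expect_eq_sum_div_card]
  constructor
  · have hmean : 𝔼 ω, (hutchinson m B ω - B.trace) = 0 := by
      simp_rw [hcentered, ← mul_expect, expect_sum_comm, Fintype.expect_comp_eval, hg,
        sum_const_zero, mul_zero]
    rwa [expect_sub_distrib, Fintype.expect_const, sub_eq_zero] at hmean
  · simp_rw [hcentered, mul_pow, ← mul_expect, Fintype.expect_sum_comp_eval_sq hg, hg2,
      Fintype.card_fin, sum_sum_eq_sum_add_sum_offDiag]
    field_simp
    ring
end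

section
/- Let δ ∈ (0, 1/2) and set ρ = 1/(1−δ) + √( (1/(1−δ))² − 1 ). Then for every z in the Bernstein ellipse E_ρ, the point w = ((1−2δ)z + 1)/2 is nonzero and |Log w| ≤ 5 log(2/δ), where Log denotes the principal branch of the complex logarithm. -/
open scoped BigOperators

/-!
With `a = 1/(1-δ)` the parameter `ρ = a + √(a² - 1)` satisfies `ρ + ρ⁻¹ = 2a`, so `E_ρ` lies in
the disc of radius `a`. Hence `u = (1-2δ)z` has `‖u‖ ≤ (1-2δ)/(1-δ) ≤ 1-δ`, and `w = (u+1)/2`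
satisfies `δ/2 ≤ ‖w‖ ≤ 1`. Then `|Re Log w| = |log ‖w‖| ≤ log(2/δ)` and `|Im Log w| ≤ π`, and
`π ≤ 4 ≤ 4 log(2/δ)` because `2/δ ≥ 4 > e`.
-/

open Real

lemma add_sqrt_sq_sub_one_add_inv {a : ℝ} (ha : 1 ≤ a) :
    (a + √(a ^ 2 - 1)) + (a + √(a ^ 2 - 1))⁻¹ = 2 * a := by
  have hs : √(a ^ 2 - 1) ^ 2 = a ^ 2 - 1 := sq_sqrt (by nlinarith)
  have hinv : (a + √(a ^ 2 - 1))⁻¹ = a - √(a ^ 2 - 1) :=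
    inv_eq_of_mul_eq_one_right (by nlinarith)
  rw [hinv]
  ring

lemma bernsteinEllipse_subset_closedBall {ρ : ℝ} (hρ : 1 < ρ) :
    bernsteinEllipse ρ ⊆ Metric.closedBall 0 ((ρ + ρ⁻¹) / 2) := by
  intro z hz
  have hinv : 0 < ρ⁻¹ := inv_pos.mpr (by linarith)
  have hB : 0 < ρ - ρ⁻¹ := by
    have : ρ⁻¹ < 1 := inv_lt_one_of_one_lt₀ hρ
    linarith
  have hBA : ρ - ρ⁻¹ ≤ ρ + ρ⁻¹ := by linarith
  have him : (2 * z.im / (ρ + ρ⁻¹)) ^ 2 ≤ (2 * z.im / (ρ - ρ⁻¹)) ^ 2 := by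
    rw [div_pow, div_pow]
    exact div_le_div_of_nonneg_left (sq_nonneg _) (by positivity) (by gcongr)
  have hsq : (2 * z.re) ^ 2 + (2 * z.im) ^ 2 ≤ (ρ + ρ⁻¹) ^ 2 := by
    have h : (2 * z.re / (ρ + ρ⁻¹)) ^ 2 + (2 * z.im / (ρ + ρ⁻¹)) ^ 2 ≤ 1 :=
      (add_le_add_right him _).trans hz
    rwa [div_pow, div_pow, ← add_div, div_le_one (by positivity)] at h
  rw [Metric.mem_closedBall, dist_zero_right,
    ← pow_le_pow_iff_left₀ (norm_nonneg z) (by positivity) two_ne_zero,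
    Complex.sq_norm, Complex.normSq_apply]
  nlinarith

lemma norm_add_one_div_two_mem_Icc {u : ℂ} {ε : ℝ} (hε : 0 ≤ ε) (hu : ‖u‖ ≤ 1 - ε) :
    ‖(u + 1) / 2‖ ∈ Set.Icc (ε / 2) 1 := by
  have hlower : 1 - ‖u‖ ≤ ‖u + 1‖ := by
    simpa [norm_neg, add_comm] using norm_sub_norm_le (1 : ℂ) (-u)
  have hupper : ‖u + 1‖ ≤ ‖u‖ + 1 := by simpa using norm_add_le u 1
  rw [norm_div, Complex.norm_two]
  constructor <;> linarith

lemma Complex.norm_log_le_log_inv_add_pi {w : ℂ} {ε : ℝ} (hε : 0 < ε)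
    (hw : ‖w‖ ∈ Set.Icc ε 1) : ‖Complex.log w‖ ≤ Real.log ε⁻¹ + π := by
  obtain ⟨hεw, hw1⟩ := hw
  have hre : |Real.log ‖w‖| ≤ Real.log ε⁻¹ := by
    rw [abs_of_nonpos (Real.log_nonpos (norm_nonneg w) hw1), Real.log_inv, neg_le_neg_iff]
    exact Real.log_le_log hε hεw
  calc ‖Complex.log w‖ ≤ |(Complex.log w).re| + |(Complex.log w).im| :=
        Complex.norm_le_abs_re_add_abs_im _
    _ = |Real.log ‖w‖| + |Complex.arg w| := by rw [Complex.log_re, Complex.log_im]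
    _ ≤ Real.log ε⁻¹ + π := add_le_add hre (Complex.abs_arg_le_pi w)

lemma one_le_log_two_div {δ : ℝ} (hδ : δ ∈ Set.Ioc (0 : ℝ) (1 / 2)) : 1 ≤ Real.log (2 / δ) := by
  obtain ⟨hδ0, hδ2⟩ := hδ
  rw [Real.le_log_iff_exp_le (by positivity)]
  have h4 : (4 : ℝ) ≤ 2 / δ := by rw [le_div_iff₀ hδ0]; linarith
  linarith [Real.exp_one_lt_d9]

/-- bound on the principal logarithm over the Bernstein ellipse. -/
theorem log_bound_on_bernsteinEllipse (δ : ℝ) (hδ : δ ∈ Set.Ioo (0 : ℝ) (1/2))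
    (ρ : ℝ) (hρ : ρ = 1 / (1 - δ) + Real.sqrt ((1 / (1 - δ)) ^ 2 - 1)) :
    ∀ z ∈ bernsteinEllipse ρ,
      ((1 - 2 * δ) * z + 1) / 2 ≠ 0 ∧
      ‖Complex.log (((1 - 2 * δ) * z + 1) / 2)‖ ≤ 5 * Real.log (2 / δ) := by
  intro z hz
  obtain ⟨hδ0, hδ2⟩ := hδ
  have ha : 1 < 1 / (1 - δ) := by rw [lt_div_iff₀ (by linarith)]; linarith
  have hρ1 : 1 < ρ := hρ ▸ lt_add_of_lt_of_nonneg ha (sqrt_nonneg _)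
  have hz : ‖z‖ ≤ 1 / (1 - δ) := by
    have h := mem_closedBall_zero_iff.mp (bernsteinEllipse_subset_closedBall hρ1 hz)
    rwa [hρ, add_sqrt_sq_sub_one_add_inv ha.le, mul_div_cancel_left₀ _ two_ne_zero] at h
  have hu : ‖(1 - 2 * (δ : ℂ)) * z‖ ≤ 1 - δ := by
    rw [norm_mul, show (1 - 2 * (δ : ℂ)) = ((1 - 2 * δ : ℝ) : ℂ) by push_cast; ring,
      Complex.norm_real, Real.norm_of_nonneg (by linarith)]
    calc (1 - 2 * δ) * ‖z‖ ≤ (1 - 2 * δ) * (1 / (1 - δ)) := by gcongr; linarith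
      _ ≤ 1 - δ := by rw [mul_one_div, div_le_iff₀ (by linarith)]; nlinarith
  have hw := norm_add_one_div_two_mem_Icc hδ0.le hu
  refine ⟨norm_pos_iff.mp ((half_pos hδ0).trans_le hw.1), ?_⟩
  calc _ ≤ Real.log (δ / 2)⁻¹ + π := Complex.norm_log_le_log_inv_add_pi (half_pos hδ0) hw
    _ ≤ 5 * Real.log (2 / δ) := by
      rw [inv_div]
      linarith [pi_le_four, one_le_log_two_div ⟨hδ0, hδ2.le⟩]
end

section
/- Let d ≥ 1, ε > 0, α = log(16d)/ε, and f(x) = (1/2)(1 + tanh(−αx)). Let q : ℝ → ℝ be any polynomial satisfying |q(x) − f(x)| ≤ 1/(16d) for all x ∈ [−1,1], and let A ∈ ℝ^{d×d} be symmetric with all eigenvalues in [−1,1]. Then: (i) if the smallest eigenvalue of A satisfies λ_min(A) ≥ ε/2, then tr(q(A)) ≤ 1/8; and (ii) if λ_min(A) ≤ −ε/2, then tr(q(A)) ≥ 3/4. -/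
open scoped BigOperators

/-!
Diagonalising `A` gives `tr q(A) = ∑ q(λᵢ)`, which is within `d · 1/(16d) = 1/16` of `∑ f(λᵢ)`.
Writing `f x = 1/(e^{2αx} + 1)` and using `e^{αε} = 16d`, we get `0 < f`, `f ≤ 1/(16d)` on
`[ε/2, ∞)` and `f ≥ 1 - 1/(16d)` on `(-∞, -ε/2]`. Hence `∑ f(λᵢ) ≤ 1/16` when all eigenvalues are
at least `ε/2`, and `∑ f(λᵢ) ≥ 15/16` as soon as one of them is at most `-ε/2`.
-/

open Polynomial

theorem Matrix.IsHermitian.trace_aeval_eq_sum_eval {𝕜 n : Type*} [RCLike 𝕜] [Fintype n]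
    [DecidableEq n] {A : Matrix n n 𝕜} (hA : A.IsHermitian) (q : ℝ[X]) :
    (aeval A q).trace = ∑ i, ((q.eval (hA.eigenvalues i) : ℝ) : 𝕜) := by
  rw [← cfc_polynomial q A hA.isSelfAdjoint, hA.cfc_eq, IsHermitian.cfc,
    Unitary.conjStarAlgAut_apply, Matrix.trace_mul_cycle, Unitary.coe_star_mul_self, one_mul,
    Matrix.trace_diagonal]
  rfl

theorem Matrix.IsHermitian.abs_trace_aeval_sub_sum_le {n : Type*} [Fintype n] [DecidableEq n]
    {A : Matrix n n ℝ} (hA : A.IsHermitian) {s : Set ℝ} (hs : ∀ i, hA.eigenvalues i ∈ s)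
    {q : ℝ[X]} {f : ℝ → ℝ} {δ : ℝ} (hqf : ∀ x ∈ s, |q.eval x - f x| ≤ δ) :
    |(aeval A q).trace - ∑ i, f (hA.eigenvalues i)| ≤ Fintype.card n * δ := by
  rw [hA.trace_aeval_eq_sum_eval, ← Finset.sum_sub_distrib, ← nsmul_eq_mul]
  exact (Finset.abs_sum_le_sum_abs _ _).trans
    (Finset.sum_le_card_nsmul _ _ _ fun i _ => hqf _ (hs i))

noncomputable def smoothStep (α x : ℝ) : ℝ := 1 / 2 * (1 + Real.tanh (-α * x))

namespace smoothStep

open Real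

theorem eq_inv_exp_add_one (α x : ℝ) : smoothStep α x = (exp (2 * α * x) + 1)⁻¹ := by
  have hexp : exp (2 * α * x) = exp (α * x) * exp (α * x) := by
    rw [← exp_add, mul_assoc, two_mul]
  rw [smoothStep, tanh_eq, neg_mul, neg_neg, hexp, exp_neg]
  field_simp
  ring

theorem pos (α x : ℝ) : 0 < smoothStep α x := by
  rw [eq_inv_exp_add_one]
  positivity

variable {α ε x : ℝ}

theorem le_exp_neg_of_half_le (hα : 0 ≤ α) (hx : ε / 2 ≤ x) :
    smoothStep α x ≤ exp (-(α * ε)) := by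
  rw [eq_inv_exp_add_one, ← inv_inv (exp (-(α * ε))), exp_neg, inv_inv]
  gcongr
  calc exp (α * ε) ≤ exp (2 * α * x) := exp_le_exp.mpr (by nlinarith)
    _ ≤ exp (2 * α * x) + 1 := le_add_of_nonneg_right zero_le_one

theorem one_sub_exp_neg_le_of_le_neg_half (hα : 0 ≤ α) (hx : x ≤ -(ε / 2)) :
    1 - exp (-(α * ε)) ≤ smoothStep α x := by
  have hexp : exp (2 * α * x) ≤ exp (-(α * ε)) := exp_le_exp.mpr (by nlinarith)
  rw [eq_inv_exp_add_one, ← one_div, le_div_iff₀ (by positivity)]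
  nlinarith [exp_pos (2 * α * x)]

end smoothStep

/-- trace of a polynomial approximating the smoothed step function
separates matrices by the sign of their smallest eigenvalue. -/
theorem trace_poly_separates {d : ℕ} (hd : 1 ≤ d) (ε : ℝ) (hε : 0 < ε)
    (α : ℝ) (hα : α = Real.log (16 * d) / ε)
    (f : ℝ → ℝ) (hf : f = fun x => (1/2) * (1 + Real.tanh (-α * x)))
    (q : Polynomial ℝ)
    (hq : ∀ x ∈ Set.Icc (-1 : ℝ) 1, |q.eval x - f x| ≤ 1 / (16 * d))
    (A : Matrix (Fin d) (Fin d) ℝ) (hA : A.IsHermitian)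
    (heig : ∀ i, hA.eigenvalues i ∈ Set.Icc (-1 : ℝ) 1) :
    ((∀ i, ε / 2 ≤ hA.eigenvalues i) → (Polynomial.aeval A q).trace ≤ 1/8) ∧
    ((∃ i, hA.eigenvalues i ≤ -(ε / 2)) → 3/4 ≤ (Polynomial.aeval A q).trace) := by
  have hd' : (1 : ℝ) ≤ d := by exact_mod_cast hd
  have hα0 : 0 ≤ α := hα ▸ div_nonneg (Real.log_nonneg (by linarith)) hε.le
  have htail : Real.exp (-(α * ε)) = 1 / (16 * d) := by
    rw [hα, div_mul_cancel₀ _ hε.ne', Real.exp_neg, Real.exp_log (by positivity), one_div]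
  have hd16 : (d : ℝ) * (1 / (16 * d)) = 1 / 16 := by field_simp
  replace hf : f = smoothStep α := hf
  subst hf
  have hclose := hA.abs_trace_aeval_sub_sum_le heig hq
  rw [Fintype.card_fin, hd16] at hclose
  obtain ⟨hlow, hupp⟩ := abs_le.mp hclose
  constructor
  · intro hpos
    have hsum : ∑ i, smoothStep α (hA.eigenvalues i) ≤ 1 / 16 := by
      calc _ ≤ Finset.univ.card • (1 / (16 * d) : ℝ) := Finset.sum_le_card_nsmul _ _ _
              fun i _ => htail ▸ smoothStep.le_exp_neg_of_half_le hα0 (hpos i)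
        _ = 1 / 16 := by rw [Finset.card_univ, Fintype.card_fin, nsmul_eq_mul, hd16]
    linarith
  · rintro ⟨i, hneg⟩
    have hsum : 15 / 16 ≤ ∑ i, smoothStep α (hA.eigenvalues i) := by
      calc (15 / 16 : ℝ) = 1 - 1 / 16 := by norm_num
        _ ≤ 1 - 1 / (16 * d) := by gcongr; linarith
        _ = 1 - Real.exp (-(α * ε)) := by rw [htail]
        _ ≤ smoothStep α (hA.eigenvalues i) :=
              smoothStep.one_sub_exp_neg_le_of_le_neg_half hα0 hneg
        _ ≤ _ := Finset.single_le_sum (fun j _ => (smoothStep.pos _ _).le) (Finset.mem_univ i)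
    linarith
end
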